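/- arXiv:2602.17013 — 4 statements merged into one kernel-verified Lean document; each statement's English description precedes it below -/
import Mathlib

section
/- Let μ, σ : ℝ → ℝ be continuously differentiable with σ(θ) > 0 for all θ, and let f : ℝ → ℝ be continuously differentiable with f and f' of polynomial growth (there exist C ≥ 0, k ∈ ℕ with |f(z)| ≤ C(1+|z|)^k and |f'(z)| ≤ C(1+|z|)^k for all z). Let γ = N(0,1) be the standard Gaussian measure on ℝ and define L(θ) = ∫ f(μ(θ) + σ(θ)·ε) dγ(ε). Then L is differentiable on ℝ and L'(θ) = ∫ f'(μ(θ) + σ(θ)·ε) · (μ'(θ) + σ'(θ)·ε) dγ(ε). -/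
open MeasureTheory ProbabilityTheory Metric
open scoped NNReal

/-! Differentiate under the integral sign. On a closed ball around `θ` the functions
`m, s, m', s'` are bounded by constants, so `|m t + s t * ε|` and `|m' t + s' t * ε|` grow at most
linearly in `|ε|`, uniformly in `t`. The polynomial growth of `f'` then dominates the
`t`-derivative of the integrand by a polynomial in `|ε|`, which is integrable because the
Gaussian has moments of all orders. -/

lemma integrable_one_add_abs_pow_gaussianReal (μ : ℝ) (v : ℝ≥0) (n : ℕ) :
    Integrable (fun x : ℝ => (1 + |x|) ^ n) (gaussianReal μ v) := by
  have h_id : MemLp id n (gaussianReal μ v) :=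
    memLp_id_gaussianReal' n (ENNReal.natCast_ne_top n)
  have h : MemLp (fun x : ℝ => 1 + ‖x‖) n (gaussianReal μ v) :=
    (memLp_const (1 : ℝ)).add h_id.norm
  refine (h.integrable_norm_pow' (p := n)).congr (ae_of_all _ fun x => ?_)
  simp only [Real.norm_eq_abs, abs_of_nonneg (by positivity : 0 ≤ 1 + |x|)]

lemma exists_abs_le_on_closedBall {a b : ℝ → ℝ} (ha : Continuous a) (hb : Continuous b)
    (θ r : ℝ) : ∃ M, ∀ t ∈ closedBall θ r, |a t| ≤ M ∧ |b t| ≤ M := by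
  obtain ⟨M, hM⟩ :=
    (isCompact_closedBall θ r).exists_bound_of_continuousOn (ha.prodMk hb).continuousOn
  exact ⟨M, fun t ht => ⟨(norm_fst_le _).trans (hM t ht), (norm_snd_le _).trans (hM t ht)⟩⟩

lemma abs_add_mul_le {a b M : ℝ} (ha : |a| ≤ M) (hb : |b| ≤ M) (x : ℝ) :
    |a + b * x| ≤ M * (1 + |x|) :=
  calc |a + b * x| ≤ |a| + |b| * |x| := by rw [← abs_mul]; exact abs_add_le _ _
    _ ≤ M * (1 + |x|) := by nlinarith [abs_nonneg x]

lemma abs_comp_add_mul_le {g : ℝ → ℝ} {C : ℝ} {k : ℕ} (hg : ∀ z, |g z| ≤ C * (1 + |z|) ^ k)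
    {a b M : ℝ} (ha : |a| ≤ M) (hb : |b| ≤ M) (x : ℝ) :
    |g (a + b * x)| ≤ C * (1 + M) ^ k * (1 + |x|) ^ k := by
  have hC : 0 ≤ C := by simpa using (abs_nonneg _).trans (hg 0)
  have hM : 0 ≤ M := (abs_nonneg a).trans ha
  calc |g (a + b * x)| ≤ C * (1 + |a + b * x|) ^ k := hg _
    _ ≤ C * ((1 + M) * (1 + |x|)) ^ k := by
        gcongr
        nlinarith [abs_add_mul_le ha hb x, abs_nonneg x]
    _ = C * (1 + M) ^ k * (1 + |x|) ^ k := by rw [mul_pow, mul_assoc]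

theorem hasDerivAt_integral_comp_add_mul {ν : Measure ℝ}
    (hν : ∀ n : ℕ, Integrable (fun x : ℝ => (1 + |x|) ^ n) ν)
    {a b g : ℝ → ℝ} (ha : ContDiff ℝ 1 a) (hb : ContDiff ℝ 1 b) (hg : ContDiff ℝ 1 g)
    {C : ℝ} {k : ℕ} (hg_grow : ∀ z, |g z| ≤ C * (1 + |z|) ^ k)
    (hg'_grow : ∀ z, |deriv g z| ≤ C * (1 + |z|) ^ k) (θ : ℝ) :
    HasDerivAt (fun t => ∫ x, g (a t + b t * x) ∂ν)
      (∫ x, deriv g (a θ + b θ * x) * (deriv a θ + deriv b θ * x) ∂ν) θ := by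
  have hg' : Continuous (deriv g) := hg.continuous_deriv le_rfl
  have ha' : Continuous (deriv a) := ha.continuous_deriv le_rfl
  have hb' : Continuous (deriv b) := hb.continuous_deriv le_rfl
  obtain ⟨M, hM⟩ := exists_abs_le_on_closedBall ha.continuous hb.continuous θ 1
  obtain ⟨M', hM'⟩ := exists_abs_le_on_closedBall ha' hb' θ 1
  have hθ : θ ∈ closedBall θ 1 := mem_closedBall_self zero_le_one
  have h_meas : ∀ t, AEStronglyMeasurable (fun x => g (a t + b t * x)) ν := fun t =>
    (hg.continuous.comp (by fun_prop)).aestronglyMeasurable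
  have h_int : Integrable (fun x => g (a θ + b θ * x)) ν :=
    ((hν k).const_mul (C * (1 + M) ^ k)).mono' (h_meas θ)
      (ae_of_all _ (abs_comp_add_mul_le hg_grow (hM θ hθ).1 (hM θ hθ).2))
  have h_bound : ∀ x, ∀ t ∈ closedBall θ 1,
      ‖deriv g (a t + b t * x) * (deriv a t + deriv b t * x)‖
        ≤ C * (1 + M) ^ k * M' * (1 + |x|) ^ (k + 1) := by
    intro x t ht
    have hg'_le := abs_comp_add_mul_le hg'_grow (hM t ht).1 (hM t ht).2 x
    calc _ = |deriv g (a t + b t * x)| * |deriv a t + deriv b t * x| := by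
          rw [Real.norm_eq_abs, abs_mul]
      _ ≤ C * (1 + M) ^ k * (1 + |x|) ^ k * (M' * (1 + |x|)) :=
          mul_le_mul hg'_le (abs_add_mul_le (hM' t ht).1 (hM' t ht).2 x) (abs_nonneg _)
            ((abs_nonneg _).trans hg'_le)
      _ = C * (1 + M) ^ k * M' * (1 + |x|) ^ (k + 1) := by ring
  have h_diff : ∀ x t, HasDerivAt (fun t => g (a t + b t * x))
      (deriv g (a t + b t * x) * (deriv a t + deriv b t * x)) t := fun x t =>
    (hg.differentiable one_ne_zero _).hasDerivAt.comp t
      ((ha.differentiable one_ne_zero t).hasDerivAt.add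
        ((hb.differentiable one_ne_zero t).hasDerivAt.mul_const x))
  exact (hasDerivAt_integral_of_dominated_loc_of_deriv_le (closedBall_mem_nhds θ one_pos)
    (.of_forall h_meas) h_int (by fun_prop : Continuous _).aestronglyMeasurable
    (ae_of_all _ h_bound) ((hν (k + 1)).const_mul _)
    (ae_of_all _ fun x t _ => h_diff x t)).2

theorem pathwise_gradient_general
    (m s : ℝ → ℝ) (hm : ContDiff ℝ 1 m) (hs : ContDiff ℝ 1 s)
    (f : ℝ → ℝ) (hf : ContDiff ℝ 1 f)
    (C : ℝ) (k : ℕ)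
    (hfgrow : ∀ z : ℝ, |f z| ≤ C * (1 + |z|) ^ k)
    (hfgrow' : ∀ z : ℝ, |deriv f z| ≤ C * (1 + |z|) ^ k)
    (θ : ℝ) :
    HasDerivAt (fun t => ∫ ε, f (m t + s t * ε) ∂(gaussianReal 0 1))
      (∫ ε, deriv f (m θ + s θ * ε) * (deriv m θ + deriv s θ * ε) ∂(gaussianReal 0 1))
      θ :=
  hasDerivAt_integral_comp_add_mul (integrable_one_add_abs_pow_gaussianReal 0 1) hm hs hf
    hfgrow hfgrow' θ

/-- The pathwise (reparameterization-trick) gradient: for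
`L(θ) = ∫ f(μ(θ) + σ(θ)·ε) dN(0,1)(ε)` with `μ, σ` continuously differentiable, `σ > 0`, and
`f` continuously differentiable with `f` and `f'` of polynomial growth, `L` is differentiable
with `L'(θ) = ∫ f'(μ(θ) + σ(θ)·ε)·(μ'(θ) + σ'(θ)·ε) dN(0,1)(ε)`. -/
theorem pathwise_gradient
    (m s : ℝ → ℝ) (hm : ContDiff ℝ 1 m) (hs : ContDiff ℝ 1 s) (hspos : ∀ θ, 0 < s θ)
    (f : ℝ → ℝ) (hf : ContDiff ℝ 1 f)
    (C : ℝ) (hC : 0 ≤ C) (k : ℕ)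
    (hfgrow : ∀ z : ℝ, |f z| ≤ C * (1 + |z|) ^ k)
    (hfgrow' : ∀ z : ℝ, |deriv f z| ≤ C * (1 + |z|) ^ k)
    (θ : ℝ) :
    HasDerivAt (fun t => ∫ ε, f (m t + s t * ε) ∂(gaussianReal 0 1))
      (∫ ε, deriv f (m θ + s θ * ε) * (deriv m θ + deriv s θ * ε) ∂(gaussianReal 0 1))
      θ :=
  pathwise_gradient_general m s hm hs f hf C k hfgrow hfgrow' θ
end

section
/- Let μ, σ : ℝ → ℝ be continuously differentiable with σ(θ) > 0 for all θ, and let f : ℝ → ℝ be continuously differentiable with f and f' of polynomial growth. Define L(θ) = ∫ f(z) dN(μ(θ), σ(θ)²)(z). Then L is differentiable and L'(θ) = ∫ f(z) · Ξ_θ(z) dN(μ(θ), σ(θ)²)(z), where the Malliavin weight is Ξ_θ(z) = μ'(θ)·(z − μ(θ))/σ(θ)² + σ'(θ)·((z − μ(θ))² − σ(θ)²)/σ(θ)³. -/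
/-!
Write `L(θ) = ∫ φ_θ(z) f(z) dz` with `φ_θ` the density of `N(μ(θ), σ(θ)²)`. Since `Ξ_θ` is the
`θ`-derivative of `log φ_θ`, we have `∂_θ φ_θ = φ_θ Ξ_θ`. On a compact neighbourhood of `θ` the
parameters `μ, σ, μ', σ'` are bounded and `σ` is bounded away from `0`, so `φ_θ(z) ≤ P e^{-b z²}`
and `|Ξ_θ(z)| ≤ Q (1 + |z|)²` uniformly; hence `φ_θ Ξ_θ f` is dominated by the integrable function
`P Q C (1 + |z|)^(k+2) e^{-b z²}`, and we may differentiate under the integral sign.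
-/

open MeasureTheory ProbabilityTheory Real Filter Topology

lemma integrable_one_add_abs_pow_mul_exp_neg_mul_sq {b : ℝ} (hb : 0 < b) (n : ℕ) :
    Integrable fun z : ℝ => (1 + |z|) ^ n * exp (-b * z ^ 2) := by
  have hpow : Integrable fun z : ℝ => |z| ^ n * exp (-b * z ^ 2) := by
    simpa [Real.rpow_natCast, abs_mul, abs_pow, abs_exp] using
      (integrable_rpow_mul_exp_neg_mul_sq hb (s := n) (by linarith [n.cast_nonneg (α := ℝ)])).abs
  refine (((integrable_exp_neg_mul_sq hb).add hpow).const_mul (2 ^ (n - 1))).mono'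
    (by fun_prop) (ae_of_all _ fun z => ?_)
  rw [norm_of_nonneg (by positivity), Pi.add_apply, ← one_add_mul, ← mul_assoc]
  gcongr
  simpa using add_pow_le zero_le_one (abs_nonneg z) n

noncomputable def malliavinWeight (μ σ μ' σ' z : ℝ) : ℝ :=
  μ' * (z - μ) / σ ^ 2 + σ' * ((z - μ) ^ 2 - σ ^ 2) / σ ^ 3

lemma continuous_malliavinWeight (μ σ μ' σ' : ℝ) : Continuous (malliavinWeight μ σ μ' σ') := by
  unfold malliavinWeight; fun_prop

lemma gaussianPDFReal_sq_toNNReal {σ : ℝ} (hσ : 0 < σ) (μ z : ℝ) :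
    gaussianPDFReal μ (σ ^ 2).toNNReal z
      = (√(2 * π) * σ)⁻¹ * exp (-(z - μ) ^ 2 / (2 * σ ^ 2)) := by
  rw [gaussianPDFReal, Real.coe_toNNReal _ (sq_nonneg σ),
    Real.sqrt_mul (by positivity : (0 : ℝ) ≤ 2 * π), Real.sqrt_sq hσ.le]

lemma hasDerivAt_gaussianPDFReal_sq_toNNReal {m s : ℝ → ℝ} {m' s' t : ℝ}
    (hm : HasDerivAt m m' t) (hs : HasDerivAt s s' t) (hst : 0 < s t) (z : ℝ) :
    HasDerivAt (fun t => gaussianPDFReal (m t) (s t ^ 2).toNNReal z)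
      (gaussianPDFReal (m t) (s t ^ 2).toNNReal z * malliavinWeight (m t) (s t) m' s' z) t := by
  have hpos : ∀ᶠ u in 𝓝 t, 0 < s u := hs.continuousAt.eventually (lt_mem_nhds hst)
  have hexplicit := ((hs.const_mul √(2 * π)).inv (mul_pos (by positivity) hst).ne').mul
    ((((hasDerivAt_const t z).sub hm).pow 2).neg.div ((hs.pow 2).const_mul 2)
      (mul_pos two_pos (pow_pos hst 2)).ne').exp
  refine (hexplicit.congr_of_eventuallyEq
    (hpos.mono fun u hu => gaussianPDFReal_sq_toNNReal hu (m u) z)).congr_deriv ?_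
  rw [gaussianPDFReal_sq_toNNReal hst, malliavinWeight]
  simp only [Pi.inv_apply, Pi.div_apply, Pi.neg_apply, Pi.sub_apply, Pi.pow_apply]
  field_simp
  ring

lemma gaussianPDFReal_sq_toNNReal_le {μ σ σ₀ σ₁ M : ℝ} (hσ₀ : 0 < σ₀) (h₀ : σ₀ ≤ σ)
    (h₁ : σ ≤ σ₁) (hμ : |μ| ≤ M) (z : ℝ) :
    gaussianPDFReal μ (σ ^ 2).toNNReal z
      ≤ (√(2 * π) * σ₀)⁻¹ * exp (M ^ 2 / (2 * σ₀ ^ 2)) * exp (-(4 * σ₁ ^ 2)⁻¹ * z ^ 2) := by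
  have hσ : 0 < σ := hσ₀.trans_le h₀
  have hμM : μ ^ 2 ≤ M ^ 2 := sq_le_sq' (abs_le.mp hμ).1 (abs_le.mp hμ).2
  have hexponent : -(z - μ) ^ 2 / (2 * σ ^ 2) ≤ M ^ 2 / (2 * σ₀ ^ 2) + -(4 * σ₁ ^ 2)⁻¹ * z ^ 2 :=
    calc -(z - μ) ^ 2 / (2 * σ ^ 2)
        = μ ^ 2 / (2 * σ ^ 2) - z ^ 2 / (4 * σ ^ 2) - (z - 2 * μ) ^ 2 / (4 * σ ^ 2) := by
          field_simp; ring
      _ ≤ μ ^ 2 / (2 * σ ^ 2) - z ^ 2 / (4 * σ ^ 2) := by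
          linarith [div_nonneg (sq_nonneg (z - 2 * μ)) (by positivity : (0 : ℝ) ≤ 4 * σ ^ 2)]
      _ ≤ M ^ 2 / (2 * σ₀ ^ 2) - z ^ 2 / (4 * σ₁ ^ 2) := by gcongr
      _ = _ := by ring
  rw [gaussianPDFReal_sq_toNNReal hσ, mul_assoc, ← exp_add]
  gcongr

lemma abs_malliavinWeight_le {μ σ μ' σ' σ₀ σ₁ M A B : ℝ} (hσ₀ : 0 < σ₀) (h₀ : σ₀ ≤ σ)
    (h₁ : σ ≤ σ₁) (hμ : |μ| ≤ M) (hμ' : |μ'| ≤ A) (hσ' : |σ'| ≤ B) (z : ℝ) :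
    |malliavinWeight μ σ μ' σ' z|
      ≤ (A * (1 + M) / σ₀ ^ 2 + B * ((1 + M) ^ 2 + σ₁ ^ 2) / σ₀ ^ 3) * (1 + |z|) ^ 2 := by
  have hσ : 0 < σ := hσ₀.trans_le h₀
  have hu : 1 ≤ 1 + |z| := le_add_of_nonneg_right (abs_nonneg z)
  have hM : 0 ≤ M := (abs_nonneg μ).trans hμ
  have hdist : |z - μ| ≤ (1 + M) * (1 + |z|) := by
    nlinarith [abs_sub z μ, abs_nonneg z]
  have hsq : |(z - μ) ^ 2 - σ ^ 2| ≤ ((1 + M) ^ 2 + σ₁ ^ 2) * (1 + |z|) ^ 2 := by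
    have hzμ : (z - μ) ^ 2 ≤ (1 + M) ^ 2 * (1 + |z|) ^ 2 := by
      rw [← mul_pow, ← sq_abs]; gcongr
    have hσσ₁ : σ ^ 2 ≤ σ₁ ^ 2 * (1 + |z|) ^ 2 :=
      calc σ ^ 2 ≤ σ₁ ^ 2 := by gcongr
        _ ≤ σ₁ ^ 2 * (1 + |z|) ^ 2 := le_mul_of_one_le_right (sq_nonneg _) (one_le_pow₀ hu)
    rw [abs_sub_le_iff]
    constructor <;> nlinarith [sq_nonneg (z - μ), sq_nonneg σ, sq_nonneg ((1 + M) * (1 + |z|))]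
  calc |malliavinWeight μ σ μ' σ' z|
      ≤ |μ'| * |z - μ| / σ ^ 2 + |σ'| * |(z - μ) ^ 2 - σ ^ 2| / σ ^ 3 := by
        rw [malliavinWeight]
        refine (abs_add_le _ _).trans_eq ?_
        simp only [abs_div, abs_mul, abs_pow, abs_of_pos hσ]
    _ ≤ A * ((1 + M) * (1 + |z|) ^ 2) / σ₀ ^ 2
        + B * (((1 + M) ^ 2 + σ₁ ^ 2) * (1 + |z|) ^ 2) / σ₀ ^ 3 := by
        have hA : 0 ≤ A := (abs_nonneg _).trans hμ'
        have hB : 0 ≤ B := (abs_nonneg _).trans hσ'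
        gcongr
        exact hdist.trans (by gcongr; nlinarith)
    _ = _ := by ring

lemma exists_bounds_gaussianPDFReal_malliavinWeight {m s m' s' : ℝ → ℝ} (hm : Continuous m)
    (hs : Continuous s) (hm' : Continuous m') (hs' : Continuous s') {K : Set ℝ}
    (hK : IsCompact K) (hspos : ∀ t ∈ K, 0 < s t) :
    ∃ P Q b : ℝ, 0 < b ∧
      (∀ t ∈ K, ∀ z, ‖gaussianPDFReal (m t) (s t ^ 2).toNNReal z‖ ≤ P * exp (-b * z ^ 2)) ∧
      ∀ t ∈ K, ∀ z, ‖malliavinWeight (m t) (s t) (m' t) (s' t) z‖ ≤ Q * (1 + |z|) ^ 2 := by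
  obtain ⟨σ₀, hσ₀, hsσ₀⟩ := hK.exists_forall_le' hs.continuousOn hspos
  obtain ⟨S, hS⟩ := hK.exists_bound_of_continuousOn hs.continuousOn
  obtain ⟨M, hM⟩ := hK.exists_bound_of_continuousOn hm.continuousOn
  obtain ⟨A, hA⟩ := hK.exists_bound_of_continuousOn hm'.continuousOn
  obtain ⟨B, hB⟩ := hK.exists_bound_of_continuousOn hs'.continuousOn
  have hsσ₁ : ∀ t ∈ K, s t ≤ max S σ₀ := fun t ht =>
    le_max_of_le_left ((le_abs_self _).trans (hS t ht))
  exact ⟨_, _, _, by positivity,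
    fun t ht z => (norm_of_nonneg (gaussianPDFReal_nonneg _ _ _)).trans_le
      (gaussianPDFReal_sq_toNNReal_le hσ₀ (hsσ₀ t ht) (hsσ₁ t ht) (hM t ht) z),
    fun t ht => abs_malliavinWeight_le hσ₀ (hsσ₀ t ht) (hsσ₁ t ht) (hM t ht) (hA t ht) (hB t ht)⟩

lemma hasDerivAt_integral_gaussianPDFReal_mul {m s m' s' f : ℝ → ℝ}
    (hm : ∀ t, HasDerivAt m (m' t) t) (hs : ∀ t, HasDerivAt s (s' t) t)
    (hm' : Continuous m') (hs' : Continuous s') (hspos : ∀ t, 0 < s t) (hf : Continuous f)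
    {C : ℝ} {k : ℕ} (hfgrow : ∀ z, |f z| ≤ C * (1 + |z|) ^ k) (θ : ℝ) :
    HasDerivAt (fun t => ∫ z, gaussianPDFReal (m t) (s t ^ 2).toNNReal z * f z)
      (∫ z, gaussianPDFReal (m θ) (s θ ^ 2).toNNReal z *
        malliavinWeight (m θ) (s θ) (m' θ) (s' θ) z * f z) θ := by
  obtain ⟨P, Q, b, hb, hp, hΞ⟩ := exists_bounds_gaussianPDFReal_malliavinWeight
    (continuous_iff_continuousAt.2 fun t => (hm t).continuousAt)
    (continuous_iff_continuousAt.2 fun t => (hs t).continuousAt) hm' hs'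
    (isCompact_closedBall θ 1) fun t _ => hspos t
  have hint : Integrable fun z => gaussianPDFReal (m θ) (s θ ^ 2).toNNReal z * f z :=
    ((integrable_one_add_abs_pow_mul_exp_neg_mul_sq hb k).const_mul (P * C)).mono'
      ((measurable_gaussianPDFReal _ _).mul hf.measurable).aestronglyMeasurable
      (ae_of_all _ fun z => (norm_mul_le_of_le (hp θ (Metric.mem_closedBall_self zero_le_one) z)
        (hfgrow z)).trans_eq (by ring))
  refine (hasDerivAt_integral_of_dominated_loc_of_deriv_le
    (F := fun t z => gaussianPDFReal (m t) (s t ^ 2).toNNReal z * f z)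
    (F' := fun t z => gaussianPDFReal (m t) (s t ^ 2).toNNReal z *
      malliavinWeight (m t) (s t) (m' t) (s' t) z * f z) (Metric.ball_mem_nhds θ one_pos)
    (Eventually.of_forall fun t =>
      ((measurable_gaussianPDFReal _ _).mul hf.measurable).aestronglyMeasurable) hint
    (((measurable_gaussianPDFReal _ _).mul (continuous_malliavinWeight _ _ _ _).measurable).mul
      hf.measurable).aestronglyMeasurable
    (ae_of_all _ fun z t ht => ?_)
    ((integrable_one_add_abs_pow_mul_exp_neg_mul_sq hb (k + 2)).const_mul (P * Q * C))
    (ae_of_all _ fun z t _ => ?_)).2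
  · have ht' := Metric.ball_subset_closedBall ht
    exact (norm_mul_le_of_le (norm_mul_le_of_le (hp t ht' z) (hΞ t ht' z)) (hfgrow z)).trans_eq
      (by ring)
  · exact (hasDerivAt_gaussianPDFReal_sq_toNNReal (hm t) (hs t) (hspos t) z).mul_const (f z)

theorem malliavin_gradient_general
    (m s : ℝ → ℝ) (hm : ContDiff ℝ 1 m) (hs : ContDiff ℝ 1 s) (hspos : ∀ θ, 0 < s θ)
    (f : ℝ → ℝ) (hf : ContDiff ℝ 1 f)
    (C : ℝ) (k : ℕ)
    (hfgrow : ∀ z : ℝ, |f z| ≤ C * (1 + |z|) ^ k)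
    (θ : ℝ) :
    HasDerivAt (fun t => ∫ z, f z ∂(gaussianReal (m t) (((s t) ^ 2).toNNReal)))
      (∫ z, f z * (deriv m θ * (z - m θ) / (s θ) ^ 2 +
          deriv s θ * ((z - m θ) ^ 2 - (s θ) ^ 2) / (s θ) ^ 3)
        ∂(gaussianReal (m θ) (((s θ) ^ 2).toNNReal)))
      θ := by
  have hvar : ∀ t, (s t ^ 2).toNNReal ≠ 0 := fun t =>
    (Real.toNNReal_pos.mpr (pow_pos (hspos t) 2)).ne'
  simp_rw [integral_gaussianReal_eq_integral_smul (hvar _), smul_eq_mul]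
  convert hasDerivAt_integral_gaussianPDFReal_mul
    (fun t => (hm.differentiable one_ne_zero t).hasDerivAt)
    (fun t => (hs.differentiable one_ne_zero t).hasDerivAt)
    (hm.continuous_deriv le_rfl) (hs.continuous_deriv le_rfl) hspos hf.continuous hfgrow θ
    using 2
  ext z
  rw [malliavinWeight]
  ring

/-- The Malliavin (score-function) form of the gradient: for
`L(θ) = ∫ f(z) dN(μ(θ), σ(θ)²)(z)` with `μ, σ` continuously differentiable, `σ > 0`, and `f`
continuously differentiable with `f` and `f'` of polynomial growth, `L` is differentiable with
`L'(θ) = ∫ f(z)·Ξ_θ(z) dN(μ(θ), σ(θ)²)(z)` where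
`Ξ_θ(z) = μ'(θ)·(z − μ(θ))/σ(θ)² + σ'(θ)·((z − μ(θ))² − σ(θ)²)/σ(θ)³`. -/
theorem malliavin_gradient
    (m s : ℝ → ℝ) (hm : ContDiff ℝ 1 m) (hs : ContDiff ℝ 1 s) (hspos : ∀ θ, 0 < s θ)
    (f : ℝ → ℝ) (hf : ContDiff ℝ 1 f)
    (C : ℝ) (hC : 0 ≤ C) (k : ℕ)
    (hfgrow : ∀ z : ℝ, |f z| ≤ C * (1 + |z|) ^ k)
    (hfgrow' : ∀ z : ℝ, |deriv f z| ≤ C * (1 + |z|) ^ k)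
    (θ : ℝ) :
    HasDerivAt (fun t => ∫ z, f z ∂(gaussianReal (m t) (((s t) ^ 2).toNNReal)))
      (∫ z, f z * (deriv m θ * (z - m θ) / (s θ) ^ 2 +
          deriv s θ * ((z - m θ) ^ 2 - (s θ) ^ 2) / (s θ) ^ 3)
        ∂(gaussianReal (m θ) (((s θ) ^ 2).toNNReal)))
      θ :=
  malliavin_gradient_general m s hm hs hspos f hf C k hfgrow θ
end

section
/- Let μ ∈ ℝ, σ > 0, a, b ∈ ℝ, and let f : ℝ → ℝ be continuously differentiable with f and f' of polynomial growth. Then the pathwise and Malliavin forms of the gradient agree: ∫ f'(μ + σ·ε)·(a + b·ε) dN(0,1)(ε) = ∫ f(z)·[ a·(z − μ)/σ² + b·((z − μ)² − σ²)/σ³ ] dN(μ, σ²)(z). -/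
/-!
Gaussian integration by parts (Stein's lemma), `v · E[h'] = E[(z - μ) h]` under `N(μ, v)`, applied
to `h = f · (a + c (z - μ))` turns `v · E[f' · (a + c (z - μ))]` into
`E[f · (a (z - μ) + c ((z - μ)² - v))]`, the Malliavin weights. The substitution `z = m + σ ε`
identifies the left side with the pathwise integral. Every integral involved is finite because
`f` and `f'` grow polynomially and a Gaussian has moments of all orders.
-/

open MeasureTheory ProbabilityTheory
open scoped NNReal

def HasPolynomialGrowth (g : ℝ → ℝ) : Prop :=
  ∃ C : ℝ, ∃ k : ℕ, ∀ x, |g x| ≤ C * (1 + |x|) ^ k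

namespace HasPolynomialGrowth

variable {g g₁ g₂ : ℝ → ℝ}

lemma const (c : ℝ) : HasPolynomialGrowth fun _ => c := ⟨|c|, 0, fun _ => by simp⟩

lemma id : HasPolynomialGrowth fun x => x :=
  ⟨1, 1, fun x => by simp⟩

lemma neg (hg : HasPolynomialGrowth g) : HasPolynomialGrowth fun x => -g x := by
  obtain ⟨C, k, hC⟩ := hg
  exact ⟨C, k, fun x => by simpa only [abs_neg] using hC x⟩

lemma add (h₁ : HasPolynomialGrowth g₁) (h₂ : HasPolynomialGrowth g₂) :
    HasPolynomialGrowth fun x => g₁ x + g₂ x := by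
  obtain ⟨C₁, k₁, hC₁⟩ := h₁
  obtain ⟨C₂, k₂, hC₂⟩ := h₂
  refine ⟨C₁ + C₂, k₁ + k₂, fun x => ?_⟩
  have h1 : 1 ≤ 1 + |x| := le_add_of_nonneg_right (abs_nonneg x)
  have hC₁0 : 0 ≤ C₁ := by simpa using (abs_nonneg _).trans (hC₁ 0)
  have hC₂0 : 0 ≤ C₂ := by simpa using (abs_nonneg _).trans (hC₂ 0)
  calc |g₁ x + g₂ x| ≤ C₁ * (1 + |x|) ^ k₁ + C₂ * (1 + |x|) ^ k₂ :=
        (abs_add_le _ _).trans (add_le_add (hC₁ x) (hC₂ x))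
    _ ≤ C₁ * (1 + |x|) ^ (k₁ + k₂) + C₂ * (1 + |x|) ^ (k₁ + k₂) := by
        gcongr <;> first | exact h1 | omega
    _ = (C₁ + C₂) * (1 + |x|) ^ (k₁ + k₂) := by ring

lemma sub (h₁ : HasPolynomialGrowth g₁) (h₂ : HasPolynomialGrowth g₂) :
    HasPolynomialGrowth fun x => g₁ x - g₂ x := by
  simpa only [sub_eq_add_neg] using h₁.add h₂.neg

lemma mul (h₁ : HasPolynomialGrowth g₁) (h₂ : HasPolynomialGrowth g₂) :
    HasPolynomialGrowth fun x => g₁ x * g₂ x := by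
  obtain ⟨C₁, k₁, hC₁⟩ := h₁
  obtain ⟨C₂, k₂, hC₂⟩ := h₂
  refine ⟨C₁ * C₂, k₁ + k₂, fun x => ?_⟩
  calc |g₁ x * g₂ x| = |g₁ x| * |g₂ x| := abs_mul _ _
    _ ≤ C₁ * (1 + |x|) ^ k₁ * (C₂ * (1 + |x|) ^ k₂) :=
        mul_le_mul (hC₁ x) (hC₂ x) (abs_nonneg _) ((abs_nonneg _).trans (hC₁ x))
    _ = C₁ * C₂ * (1 + |x|) ^ (k₁ + k₂) := by ring

lemma integrable {μ : Measure ℝ} [IsFiniteMeasure μ] (hμ : ∀ p : ℕ, MemLp _root_.id p μ)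
    (hg : HasPolynomialGrowth g) (hmeas : AEStronglyMeasurable g μ) : Integrable g μ := by
  obtain ⟨C, k, hC⟩ := hg
  have hmom : Integrable (fun x : ℝ => ‖1 + ‖x‖‖ ^ k) μ :=
    ((memLp_const (1 : ℝ)).add (hμ k).norm).integrable_norm_pow'
  refine (hmom.const_mul C).mono' hmeas (ae_of_all _ fun x => ?_)
  simp only [Real.norm_eq_abs]
  rw [abs_of_nonneg (by positivity : (0 : ℝ) ≤ 1 + |x|)]
  exact hC x

lemma integrable_gaussianReal (hg : HasPolynomialGrowth g) (hc : Continuous g) (μ : ℝ)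
    (v : ℝ≥0) : Integrable g (gaussianReal μ v) :=
  hg.integrable (fun p => by exact_mod_cast memLp_id_gaussianReal (p : ℝ≥0))
    hc.aestronglyMeasurable

end HasPolynomialGrowth

lemma hasDerivAt_gaussianPDFReal (μ : ℝ) (v : ℝ≥0) (x : ℝ) :
    HasDerivAt (gaussianPDFReal μ v) (-(x - μ) / v * gaussianPDFReal μ v x) x := by
  have hexp : HasDerivAt (fun x => -(x - μ) ^ 2 / (2 * v)) (-(x - μ) / v) x :=
    ((((hasDerivAt_id' x).sub_const μ).pow 2).neg.div_const (2 * (v : ℝ))).congr_deriv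
      (by field_simp; ring)
  rw [gaussianPDFReal_def]
  exact (hexp.exp.const_mul (√(2 * Real.pi * v))⁻¹).congr_deriv (by ring)

theorem integral_sub_mul_gaussianReal_eq_mul_integral_deriv {μ : ℝ} {v : ℝ≥0} {h h' : ℝ → ℝ}
    (hh : ∀ x, HasDerivAt h (h' x) x) (hi : Integrable h (gaussianReal μ v))
    (hi' : Integrable h' (gaussianReal μ v))
    (hix : Integrable (fun x => (x - μ) * h x) (gaussianReal μ v)) :
    ∫ x, (x - μ) * h x ∂gaussianReal μ v = v * ∫ x, h' x ∂gaussianReal μ v := by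
  rcases eq_or_ne v 0 with rfl | hv
  · simp [gaussianReal_zero_var]
  have hdens : ∀ {g : ℝ → ℝ}, Integrable g (gaussianReal μ v) →
      Integrable (fun x => gaussianPDFReal μ v x * g x) := fun hg => by
    rw [gaussianReal_of_var_ne_zero μ hv, integrable_withDensity_iff_integrable_smul'
      (measurable_gaussianPDF μ v) (ae_of_all _ fun _ => gaussianPDF_lt_top)] at hg
    simpa using hg
  have hparts := integral_mul_deriv_eq_deriv_mul_of_integrable (u := h) (u' := h')
    (v' := fun x => -(x - μ) / v * gaussianPDFReal μ v x)
    (fun x _ => hh x) (fun x _ => hasDerivAt_gaussianPDFReal μ v x)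
    (((hdens hix).const_mul (-(v : ℝ)⁻¹)).congr (ae_of_all _ fun x => by
      simp only [Pi.mul_apply]; ring))
    ((hdens hi').congr (ae_of_all _ fun x => mul_comm _ _))
    ((hdens hi).congr (ae_of_all _ fun x => mul_comm _ _))
  simp only [integral_gaussianReal_eq_integral_smul hv, smul_eq_mul]
  calc ∫ x, gaussianPDFReal μ v x * ((x - μ) * h x)
      = ∫ x, -(v : ℝ) * (h x * (-(x - μ) / v * gaussianPDFReal μ v x)) := by
        congr 1 with x
        field_simp
    _ = v * ∫ x, gaussianPDFReal μ v x * h' x := by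
        simp only [integral_const_mul, hparts, mul_comm (h' _)]
        ring

theorem integral_deriv_mul_affine_gaussianReal {μ : ℝ} {v : ℝ≥0} {f : ℝ → ℝ}
    (hf : ContDiff ℝ 1 f) (hf₀ : HasPolynomialGrowth f) (hf₁ : HasPolynomialGrowth (deriv f))
    (a c : ℝ) :
    v * ∫ z, deriv f z * (a + c * (z - μ)) ∂gaussianReal μ v =
      ∫ z, f z * (a * (z - μ) + c * ((z - μ) ^ 2 - v)) ∂gaussianReal μ v := by
  have hfc : Continuous f := hf.continuous
  have hf'c : Continuous (deriv f) := hf.continuous_deriv le_rfl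
  have hw : HasPolynomialGrowth fun z => a + c * (z - μ) :=
    (HasPolynomialGrowth.const a).add ((HasPolynomialGrowth.const c).mul
      (HasPolynomialGrowth.id.sub (HasPolynomialGrowth.const μ)))
  have hderiv : ∀ z, HasDerivAt (fun z => f z * (a + c * (z - μ)))
      (deriv f z * (a + c * (z - μ)) + f z * c) z := fun z =>
    ((hf.differentiable one_ne_zero z).hasDerivAt.mul
      ((((hasDerivAt_id' z).sub_const μ).const_mul c).const_add a)).congr_deriv (by ring)
  have hf'w := (hf₁.mul hw).integrable_gaussianReal (by fun_prop) μ v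
  have hfint := hf₀.integrable_gaussianReal hfc μ v
  have hxfw := ((HasPolynomialGrowth.id.sub (HasPolynomialGrowth.const μ)).mul
    (hf₀.mul hw)).integrable_gaussianReal (by fun_prop) μ v
  have hstein := integral_sub_mul_gaussianReal_eq_mul_integral_deriv hderiv
    ((hf₀.mul hw).integrable_gaussianReal (by fun_prop) μ v) (hf'w.add (hfint.mul_const c)) hxfw
  rw [integral_add hf'w (hfint.mul_const c), integral_mul_const] at hstein
  calc v * ∫ z, deriv f z * (a + c * (z - μ)) ∂gaussianReal μ v
      = ∫ z, (z - μ) * (f z * (a + c * (z - μ))) ∂gaussianReal μ v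
          - ∫ z, (v * c) * f z ∂gaussianReal μ v := by
        rw [hstein, integral_const_mul]; ring
    _ = _ := by
        rw [← integral_sub hxfw (hfint.const_mul _)]
        congr 1 with z
        ring

lemma integral_comp_const_add_mul_gaussianReal (m : ℝ) {σ : ℝ} (hσ : σ ≠ 0) (F : ℝ → ℝ) :
    ∫ ε, F (m + σ * ε) ∂gaussianReal 0 1 = ∫ z, F z ∂gaussianReal m (σ ^ 2).toNNReal := by
  have hemb : MeasurableEmbedding fun ε : ℝ => m + σ * ε :=
    (Homeomorph.addLeft m).measurableEmbedding.comp (Homeomorph.mulLeft₀ σ hσ).measurableEmbedding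
  have hmap : (gaussianReal 0 1).map (fun ε => m + σ * ε) = gaussianReal m (σ ^ 2).toNNReal := by
    rw [show (fun ε => m + σ * ε) = (m + ·) ∘ (σ * ·) from rfl,
      ← Measure.map_map (measurable_const_add m) (measurable_const_mul σ),
      gaussianReal_map_const_mul, gaussianReal_map_const_add]
    congr 1
    · ring
    · ext; simp [sq_nonneg]
  rw [← hmap, hemb.integral_map]

theorem pathwise_malliavin_equivalence_general
    (m σ a b : ℝ) (hσ : 0 < σ)
    (f : ℝ → ℝ) (hf : ContDiff ℝ 1 f)
    (C : ℝ) (k : ℕ)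
    (hfgrow : ∀ z : ℝ, |f z| ≤ C * (1 + |z|) ^ k)
    (hfgrow' : ∀ z : ℝ, |deriv f z| ≤ C * (1 + |z|) ^ k) :
    ∫ ε, deriv f (m + σ * ε) * (a + b * ε) ∂(gaussianReal 0 1) =
      ∫ z, f z * (a * (z - m) / σ ^ 2 + b * ((z - m) ^ 2 - σ ^ 2) / σ ^ 3)
        ∂(gaussianReal m ((σ ^ 2).toNNReal)) := by
  have hv : (((σ ^ 2).toNNReal : ℝ≥0) : ℝ) = σ ^ 2 := Real.coe_toNNReal _ (sq_nonneg σ)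
  have hstein := integral_deriv_mul_affine_gaussianReal (μ := m) (v := (σ ^ 2).toNNReal) hf
    ⟨C, k, hfgrow⟩ ⟨C, k, hfgrow'⟩ a (b / σ)
  rw [hv] at hstein
  calc ∫ ε, deriv f (m + σ * ε) * (a + b * ε) ∂gaussianReal 0 1
      = ∫ z, deriv f z * (a + b / σ * (z - m)) ∂gaussianReal m (σ ^ 2).toNNReal := by
        rw [← integral_comp_const_add_mul_gaussianReal m hσ.ne']
        congr 1 with ε
        field_simp
        ring
    _ = (σ ^ 2)⁻¹ * ∫ z, f z * (a * (z - m) + b / σ * ((z - m) ^ 2 - σ ^ 2))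
          ∂gaussianReal m (σ ^ 2).toNNReal := by
        rw [← hstein]
        field_simp
    _ = _ := by
        rw [← integral_const_mul]
        congr 1 with z
        field_simp

/-- Pathwise–Malliavin equivalence for Gaussian measures: for `f` continuously differentiable
with `f` and `f'` of polynomial growth, the pathwise and Malliavin forms of the gradient agree:
`∫ f'(μ + σε)·(a + bε) dN(0,1)(ε)
  = ∫ f(z)·(a·(z − μ)/σ² + b·((z − μ)² − σ²)/σ³) dN(μ, σ²)(z)`. -/
theorem pathwise_malliavin_equivalence
    (m σ a b : ℝ) (hσ : 0 < σ)
    (f : ℝ → ℝ) (hf : ContDiff ℝ 1 f)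
    (C : ℝ) (hC : 0 ≤ C) (k : ℕ)
    (hfgrow : ∀ z : ℝ, |f z| ≤ C * (1 + |z|) ^ k)
    (hfgrow' : ∀ z : ℝ, |deriv f z| ≤ C * (1 + |z|) ^ k) :
    ∫ ε, deriv f (m + σ * ε) * (a + b * ε) ∂(gaussianReal 0 1) =
      ∫ z, f z * (a * (z - m) / σ ^ 2 + b * ((z - m) ^ 2 - σ ^ 2) / σ ^ 3)
        ∂(gaussianReal m ((σ ^ 2).toNNReal)) :=
  pathwise_malliavin_equivalence_general m σ a b hσ f hf C k hfgrow hfgrow'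
end

section
/- Let B ≥ 2 be an integer, M > 0, ε > 0, and let (X_i, Y_i), i = 1,…,B, be independent identically distributed pairs of real random variables with |X_i| ≤ M and |Y_i| ≤ M almost surely. Define the empirical means X̄ = (1/B)Σ X_i, Ȳ = (1/B)Σ Y_i, the empirical variances v̂_P = (1/(B−1))Σ(X_i − X̄)², v̂_M = (1/(B−1))Σ(Y_i − Ȳ)², the empirical covariance ĉ = (1/(B−1))Σ(X_i − X̄)(Y_i − Ȳ), and the regularized empirical mixing weight λ̂ = (v̂_M − ĉ)/(v̂_P + v̂_M − 2ĉ + ε). Let λ*_ε = (Var[Y₁] − Cov(X₁,Y₁))/(Var[X₁] + Var[Y₁] − 2·Cov(X₁,Y₁) + ε) be the corresponding population quantity. Then there exists a constant C, depending only on M and ε (not on B or δ), such that for every δ ∈ (0,1), with probability at least 1 − δ, |λ̂ − λ*_ε| ≤ C·√(log(6/δ)/B). -/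
open MeasureTheory ProbabilityTheory

/-- Covariance of two real-valued random variables. -/
noncomputable def covar {Ω : Type*} [MeasurableSpace Ω] (μ : Measure Ω) (X Y : Ω → ℝ) : ℝ :=
  ∫ ω, (X ω - ∫ ω', X ω' ∂μ) * (Y ω - ∫ ω', Y ω' ∂μ) ∂μ

/-- Empirical mean of a sample `Z₁, …, Z_B`. -/
noncomputable def empMean {Ω : Type*} {B : ℕ} (Z : Fin B → Ω → ℝ) (ω : Ω) : ℝ :=
  (∑ i, Z i ω) / B

/-- Empirical covariance (with Bessel's correction) of a sample of pairs. -/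
noncomputable def empCovar {Ω : Type*} {B : ℕ} (X Y : Fin B → Ω → ℝ) (ω : Ω) : ℝ :=
  (∑ i, (X i ω - empMean X ω) * (Y i ω - empMean Y ω)) / ((B : ℝ) - 1)

/-- The regularized empirical mixing weight
`λ̂ = (v̂_M − ĉ)/(v̂_P + v̂_M − 2ĉ + ε)` computed from a sample of pairs. -/
noncomputable def empLambda {Ω : Type*} {B : ℕ} (ε : ℝ) (X Y : Fin B → Ω → ℝ) (ω : Ω) : ℝ :=
  (empCovar Y Y ω - empCovar X Y ω) /
    (empCovar X X ω + empCovar Y Y ω - 2 * empCovar X Y ω + ε)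

/-!
Each of `v̂_P`, `v̂_M`, `ĉ` is `B/(B-1) = 1 + O(1/B)` times a polynomial in the five empirical
means of `X`, `Y`, `X²`, `Y²`, `XY`, which are averages of `B` i.i.d. variables bounded by
`K = max M M²`. Hoeffding's inequality and a union bound put all five within
`a = 2K√(log(6/δ)/B)` of their expectations, outside an event of probability `5δ²/18 ≤ δ`.
There the three estimates are within `O(a + 1/B)` of `Var X₁`, `Var Y₁`, `Cov(X₁,Y₁)`, and
since both denominators `v̂_P + v̂_M − 2ĉ + ε` and `Var(X₁ − Y₁) + ε` are at least `ε`, the map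
`(v_P, v_M, c) ↦ (v_M − c)/(v_P + v_M − 2c + ε)` is Lipschitz there with a constant depending
only on `M` and `ε`. Finally `1/B ≤ √(log(6/δ)/B)`.
-/

open Real
open scoped NNReal

lemma abs_mul_le_sq {x y M : ℝ} (hx : |x| ≤ M) (hy : |y| ≤ M) : |x * y| ≤ M ^ 2 := by
  rw [abs_mul, sq]
  exact mul_le_mul hx hy (abs_nonneg _) ((abs_nonneg _).trans hx)

lemma abs_div_sub_div_le {n₁ d₁ n₂ d₂ ε P u v : ℝ} (hε : 0 < ε) (hd₁ : ε ≤ d₁) (hd₂ : ε ≤ d₂)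
    (hP : |n₂| ≤ P) (hu : |n₁ - n₂| ≤ u) (hv : |d₁ - d₂| ≤ v) :
    |n₁ / d₁ - n₂ / d₂| ≤ u / ε + P * v / ε ^ 2 := by
  have hd₁' : 0 < d₁ := hε.trans_le hd₁
  have hd₂' : 0 < d₂ := hε.trans_le hd₂
  have hsplit : n₁ / d₁ - n₂ / d₂ = (n₁ - n₂) / d₁ - n₂ * (d₁ - d₂) / (d₁ * d₂) := by
    field_simp; ring
  have hfirst : |(n₁ - n₂) / d₁| ≤ u / ε := by
    rw [abs_div, abs_of_pos hd₁']
    exact div_le_div₀ ((abs_nonneg _).trans hu) hu hε hd₁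
  have hsecond : |n₂ * (d₁ - d₂) / (d₁ * d₂)| ≤ P * v / ε ^ 2 := by
    rw [abs_div, abs_mul, abs_of_pos (mul_pos hd₁' hd₂'), sq]
    exact div_le_div₀ (mul_nonneg ((abs_nonneg _).trans hP) ((abs_nonneg _).trans hv))
      (mul_le_mul hP hv (abs_nonneg _) ((abs_nonneg _).trans hP)) (by positivity)
      (mul_le_mul hd₁ hd₂ hε.le hd₁'.le)
  rw [hsplit]
  exact (abs_sub _ _).trans (add_le_add hfirst hsecond)

noncomputable def mixingWeight (ε vP vM c : ℝ) : ℝ :=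
  (vM - c) / (vP + vM - 2 * c + ε)

lemma abs_mixingWeight_sub_le {ε vP vM c vP' vM' c' P η : ℝ} (hε : 0 < ε)
    (hD : 0 ≤ vP + vM - 2 * c) (hD' : 0 ≤ vP' + vM' - 2 * c') (hP : |vM' - c'| ≤ P)
    (hvP : |vP - vP'| ≤ η) (hvM : |vM - vM'| ≤ η) (hc : |c - c'| ≤ η) :
    |mixingWeight ε vP vM c - mixingWeight ε vP' vM' c'| ≤ (2 / ε + 4 * P / ε ^ 2) * η := by
  have hnum : |(vM - c) - (vM' - c')| ≤ 2 * η := by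
    rw [show (vM - c) - (vM' - c') = (vM - vM') - (c - c') by ring]
    linarith [abs_sub (vM - vM') (c - c')]
  have hden : |(vP + vM - 2 * c + ε) - (vP' + vM' - 2 * c' + ε)| ≤ 4 * η := by
    rw [show (vP + vM - 2 * c + ε) - (vP' + vM' - 2 * c' + ε)
      = (vP - vP') + (vM - vM') - 2 * (c - c') by ring]
    calc _ ≤ |vP - vP'| + |vM - vM'| + |2 * (c - c')| :=
          (abs_sub _ _).trans (add_le_add_left (abs_add_le _ _) _)
      _ ≤ 4 * η := by rw [abs_mul, abs_two]; linarith
  calc _ ≤ 2 * η / ε + P * (4 * η) / ε ^ 2 :=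
        abs_div_sub_div_le hε (by linarith) (by linarith) hP hnum hden
    _ = (2 / ε + 4 * P / ε ^ 2) * η := by ring

section Empirical

variable {Ω : Type*} {B : ℕ}

lemma natCast_mul_empMean (Z : Fin B → Ω → ℝ) (ω : Ω) : B * empMean Z ω = ∑ i, Z i ω := by
  rcases B.eq_zero_or_pos with rfl | hB
  · simp
  · rw [empMean, mul_div_cancel₀ _ (by positivity)]

lemma abs_empMean_le {Z : Fin B → Ω → ℝ} {ω : Ω} {M : ℝ} (hM : 0 ≤ M)
    (hZ : ∀ i, |Z i ω| ≤ M) : |empMean Z ω| ≤ M := by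
  rcases B.eq_zero_or_pos with rfl | hB
  · simpa [empMean] using hM
  rw [empMean, abs_div, Nat.abs_cast, div_le_iff₀ (by positivity)]
  calc |∑ i, Z i ω| ≤ ∑ i, |Z i ω| := Finset.abs_sum_le_sum_abs _ _
    _ ≤ ∑ _i : Fin B, M := Finset.sum_le_sum fun i _ ↦ hZ i
    _ = M * B := by simp [mul_comm]

lemma sum_sub_empMean_mul_sub_empMean (X Y : Fin B → Ω → ℝ) (ω : Ω) :
    ∑ i, (X i ω - empMean X ω) * (Y i ω - empMean Y ω) =
      B * (empMean (fun i ω ↦ X i ω * Y i ω) ω - empMean X ω * empMean Y ω) := by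
  rw [mul_sub, natCast_mul_empMean (fun i ω ↦ X i ω * Y i ω)]
  simp only [sub_mul, mul_sub, Finset.sum_sub_distrib, ← Finset.sum_mul, ← Finset.mul_sum,
    Finset.sum_const, Finset.card_univ, Fintype.card_fin, nsmul_eq_mul,
    ← natCast_mul_empMean X, ← natCast_mul_empMean Y]
  ring

lemma empCovar_add_empCovar_sub_two_mul_nonneg (X Y : Fin B → Ω → ℝ) (ω : Ω) :
    0 ≤ empCovar X X ω + empCovar Y Y ω - 2 * empCovar X Y ω := by
  rcases B.eq_zero_or_pos with rfl | hB
  · simp [empCovar]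
  have hsq : empCovar X X ω + empCovar Y Y ω - 2 * empCovar X Y ω =
      (∑ i, ((X i ω - empMean X ω) - (Y i ω - empMean Y ω)) ^ 2) / ((B : ℝ) - 1) := by
    simp only [empCovar, ← add_div, mul_div_assoc', div_sub_div_same, ← Finset.sum_add_distrib,
      Finset.mul_sum, ← Finset.sum_sub_distrib]
    exact congrArg (· / ((B : ℝ) - 1)) (Finset.sum_congr rfl fun i _ ↦ by ring)
  rw [hsq]
  exact div_nonneg (Finset.sum_nonneg fun i _ ↦ sq_nonneg _)
    (sub_nonneg.mpr (by exact_mod_cast hB))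

lemma abs_empCovar_sub_le (hB : 2 ≤ B) {X Y : Fin B → Ω → ℝ} {ω : Ω} {M a m₁ m₂ q : ℝ}
    (hM : 0 ≤ M) (hX : ∀ i, |X i ω| ≤ M) (hY : ∀ i, |Y i ω| ≤ M) (hm₂ : |m₂| ≤ M)
    (h₁ : |empMean X ω - m₁| ≤ a) (h₂ : |empMean Y ω - m₂| ≤ a)
    (h₁₂ : |empMean (fun i ω ↦ X i ω * Y i ω) ω - q| ≤ a) :
    |empCovar X Y ω - (q - m₁ * m₂)| ≤ (1 + 2 * M) * a + 4 * M ^ 2 / B := by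
  have hB' : (2 : ℝ) ≤ B := by exact_mod_cast hB
  have hcov : empCovar X Y ω =
      (empMean (fun i ω ↦ X i ω * Y i ω) ω - empMean X ω * empMean Y ω) +
        (empMean (fun i ω ↦ X i ω * Y i ω) ω - empMean X ω * empMean Y ω) / (B - 1) := by
    rw [empCovar, sum_sub_empMean_mul_sub_empMean]
    field_simp [show (B : ℝ) - 1 ≠ 0 by linarith]
    ring
  set p₁ := empMean X ω
  set p₂ := empMean Y ω
  set p₁₂ := empMean (fun i ω ↦ X i ω * Y i ω) ω
  have hp₁ : |p₁| ≤ M := abs_empMean_le hM hX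
  have hs : |p₁₂ - p₁ * p₂| ≤ 2 * M ^ 2 := by
    have := abs_empMean_le (Z := fun i ω ↦ X i ω * Y i ω) (sq_nonneg M)
      fun i ↦ abs_mul_le_sq (hX i) (hY i)
    linarith [abs_sub p₁₂ (p₁ * p₂), abs_mul_le_sq hp₁ (abs_empMean_le hM hY)]
  have hbias : |(p₁₂ - p₁ * p₂) / (B - 1)| ≤ 4 * M ^ 2 / B := by
    rw [abs_div, abs_of_pos (show (0 : ℝ) < B - 1 by linarith),
      div_le_div_iff₀ (by linarith) (by linarith)]
    nlinarith [abs_nonneg (p₁₂ - p₁ * p₂)]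
  have hmoment : |(p₁₂ - p₁ * p₂) - (q - m₁ * m₂)| ≤ (1 + 2 * M) * a := by
    rw [show (p₁₂ - p₁ * p₂) - (q - m₁ * m₂) = (p₁₂ - q) - p₁ * (p₂ - m₂) - m₂ * (p₁ - m₁) by ring]
    calc _ ≤ |p₁₂ - q| + |p₁| * |p₂ - m₂| + |m₂| * |p₁ - m₁| := by
          rw [← abs_mul, ← abs_mul]
          exact (abs_sub _ _).trans (add_le_add_left (abs_sub _ _) _)
      _ ≤ a + M * a + M * a := by gcongr
      _ = (1 + 2 * M) * a := by ring
  rw [hcov, add_sub_right_comm]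
  linarith [abs_add_le ((p₁₂ - p₁ * p₂) - (q - m₁ * m₂)) ((p₁₂ - p₁ * p₂) / (B - 1))]

end Empirical

section Probability

variable {Ω : Type*} {mΩ : MeasurableSpace Ω} {μ : Measure Ω}

lemma measureReal_abs_sum_ge_le [IsFiniteMeasure μ] {ι : Type*} {s : Finset ι} {W : ι → Ω → ℝ}
    (hind : iIndepFun W μ) {c : ι → ℝ≥0} (hW : ∀ i ∈ s, HasSubgaussianMGF (W i) (c i) μ)
    {t : ℝ} (ht : 0 ≤ t) :
    μ.real {ω | t ≤ |∑ i ∈ s, W i ω|} ≤ 2 * exp (-t ^ 2 / (2 * ∑ i ∈ s, c i)) := by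
  have hneg : μ.real {ω | t ≤ ∑ i ∈ s, -W i ω} ≤ exp (-t ^ 2 / (2 * ∑ i ∈ s, c i)) :=
    HasSubgaussianMGF.measure_sum_ge_le_of_iIndepFun
      (hind.comp (fun _ x ↦ -x) fun _ ↦ measurable_neg) (fun i hi ↦ (hW i hi).neg) ht
  calc μ.real {ω | t ≤ |∑ i ∈ s, W i ω|}
      ≤ μ.real ({ω | t ≤ ∑ i ∈ s, W i ω} ∪ {ω | t ≤ ∑ i ∈ s, -W i ω}) := by
        refine measureReal_mono (fun ω hω ↦ ?_)
        simpa [Finset.sum_neg_distrib, le_abs, or_comm] using hω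
    _ ≤ _ := (measureReal_union_le _ _).trans
        (by linarith [HasSubgaussianMGF.measure_sum_ge_le_of_iIndepFun hind hW ht])

variable [IsProbabilityMeasure μ]

lemma ofReal_one_sub_le_of_measureReal_compl_le {s : Set Ω} {δ : ℝ} (h : μ.real sᶜ ≤ δ) :
    ENNReal.ofReal (1 - δ) ≤ μ s := by
  have hcover : 1 ≤ μ.real s + μ.real sᶜ := by
    simpa using measureReal_union_le (μ := μ) s sᶜ
  rw [← ofReal_measureReal]
  exact ENNReal.ofReal_le_ofReal (by linarith)

lemma abs_integral_le_of_ae_abs_le {f : Ω → ℝ} {C : ℝ} (hf : ∀ᵐ ω ∂μ, |f ω| ≤ C) :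
    |μ[f]| ≤ C := by
  simpa using norm_integral_le_of_norm_le_const (μ := μ) (f := f) (by simpa using hf)

lemma variance_eq_integral_mul_sub {X : Ω → ℝ} (hX : MemLp X 2 μ) :
    Var[X; μ] = μ[X * X] - μ[X] * μ[X] := by
  rw [← covariance_self hX.aemeasurable, covariance_eq_sub hX hX]

lemma measureReal_abs_empMean_sub_ge_le {B : ℕ} (hB : 0 < B) {Z : Fin B → Ω → ℝ}
    (hind : iIndepFun Z μ) (hZ : ∀ i, AEMeasurable (Z i) μ) {K : ℝ}
    (hb : ∀ i, ∀ᵐ ω ∂μ, |Z i ω| ≤ K) {m : ℝ} (hm : ∀ i, μ[Z i] = m) {t : ℝ} (ht : 0 ≤ t) :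
    μ.real {ω | t ≤ |empMean Z ω - m|} ≤ 2 * exp (-B * t ^ 2 / (2 * K ^ 2)) := by
  have hsubG : ∀ i ∈ (Finset.univ : Finset (Fin B)),
      HasSubgaussianMGF (fun ω ↦ Z i ω - μ[Z i]) ((‖K - -K‖₊ / 2) ^ 2) μ := fun i _ ↦
    hasSubgaussianMGF_of_mem_Icc (hZ i) <| (hb i).mono fun ω hω ↦ abs_le.mp hω
  have hparam : (((‖K - -K‖₊ / 2) ^ 2 : ℝ≥0) : ℝ) = K ^ 2 := by
    simp [← two_mul]
  have hBt : 0 ≤ (B : ℝ) * t := by positivity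
  have := measureReal_abs_sum_ge_le
    (hind.comp (fun i x ↦ x - μ[Z i]) fun _ ↦ measurable_id.sub_const _) hsubG hBt
  simp only [Function.comp_apply, hm, Finset.sum_sub_distrib, Finset.sum_const, Finset.card_univ,
    Fintype.card_fin, nsmul_eq_mul, ← natCast_mul_empMean, ← mul_sub, NNReal.coe_mul,
    NNReal.coe_natCast, hparam] at this
  convert this using 2
  · ext ω
    have hB' : (0 : ℝ) < B := by exact_mod_cast hB
    rw [Set.mem_ofPred_eq, Set.mem_ofPred_eq, abs_mul, Nat.abs_cast, mul_le_mul_iff_right₀ hB']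
  · field_simp

lemma measureReal_exists_abs_empMean_comp_sub_ge_le {E κ : Type*} [MeasurableSpace E] [Fintype κ]
    {B : ℕ} (hB : 0 < B) {V : Fin B → Ω → E} (hind : iIndepFun V μ) {j : Fin B}
    (hid : ∀ i, IdentDistrib (V i) (V j) μ μ) {g : κ → E → ℝ} (hg : ∀ k, Measurable (g k))
    {K : ℝ} (hb : ∀ k i, ∀ᵐ ω ∂μ, |g k (V i ω)| ≤ K) {t : ℝ} (ht : 0 ≤ t) :
    μ.real {ω | ∃ k, t ≤ |empMean (fun i ω ↦ g k (V i ω)) ω - μ[fun ω ↦ g k (V j ω)]|} ≤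
      Fintype.card κ * (2 * exp (-B * t ^ 2 / (2 * K ^ 2))) := by
  rw [Set.ofPred_exists]
  refine (measureReal_iUnion_fintype_le _).trans ?_
  rw [← nsmul_eq_mul, ← Finset.card_univ, ← Finset.sum_const]
  exact Finset.sum_le_sum fun k _ ↦ measureReal_abs_empMean_sub_ge_le hB
    (hind.comp (fun _ ↦ g k) fun _ ↦ hg k)
    (fun i ↦ (hg k).comp_aemeasurable (hid i).aemeasurable_fst) (hb k) (fun i ↦ ((hid i).comp (hg k)).integral_eq) ht

end Probability

def pairMonomial : Fin 5 → ℝ × ℝ → ℝ :=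
  ![Prod.fst, Prod.snd, fun p ↦ p.1 * p.1, fun p ↦ p.2 * p.2, fun p ↦ p.1 * p.2]

lemma measurable_pairMonomial (k : Fin 5) : Measurable (pairMonomial k) := by
  fin_cases k
  exacts [measurable_fst, measurable_snd, measurable_fst.mul measurable_fst,
    measurable_snd.mul measurable_snd, measurable_fst.mul measurable_snd]

lemma abs_pairMonomial_le {p : ℝ × ℝ} {M : ℝ} (h₁ : |p.1| ≤ M) (h₂ : |p.2| ≤ M) (k : Fin 5) :
    |pairMonomial k p| ≤ max M (M ^ 2) := by
  fin_cases k
  · exact h₁.trans (le_max_left _ _)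
  · exact h₂.trans (le_max_left _ _)
  · exact (abs_mul_le_sq h₁ h₁).trans (le_max_right _ _)
  · exact (abs_mul_le_sq h₂ h₂).trans (le_max_right _ _)
  · exact (abs_mul_le_sq h₁ h₂).trans (le_max_right _ _)

lemma abs_empLambda_sub_mixingWeight_le {Ω : Type*} {mΩ : MeasurableSpace Ω} {μ : Measure Ω}
    [IsProbabilityMeasure μ] {B : ℕ} (hB : 2 ≤ B) {M ε a : ℝ} (hM : 0 ≤ M) (hε : 0 < ε)
    {X₀ Y₀ : Ω → ℝ} (hX₀ : AEMeasurable X₀ μ) (hY₀ : AEMeasurable Y₀ μ)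
    (hX₀M : ∀ᵐ ω ∂μ, |X₀ ω| ≤ M) (hY₀M : ∀ᵐ ω ∂μ, |Y₀ ω| ≤ M)
    {X Y : Fin B → Ω → ℝ} {ω : Ω} (hX : ∀ i, |X i ω| ≤ M) (hY : ∀ i, |Y i ω| ≤ M)
    (hdev : ∀ k, |empMean (fun i ω ↦ pairMonomial k (X i ω, Y i ω)) ω -
      μ[fun ω ↦ pairMonomial k (X₀ ω, Y₀ ω)]| ≤ a) :
    |empLambda ε X Y ω - mixingWeight ε Var[X₀; μ] Var[Y₀; μ] cov[X₀, Y₀; μ]| ≤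
      (2 / ε + 16 * M ^ 2 / ε ^ 2) * ((1 + 2 * M) * a + 4 * M ^ 2 / B) := by
  have hX₀2 : MemLp X₀ 2 μ := .of_bound hX₀.aestronglyMeasurable M (by simpa using hX₀M)
  have hY₀2 : MemLp Y₀ 2 μ := .of_bound hY₀.aestronglyMeasurable M (by simpa using hY₀M)
  have hm₁ : |μ[X₀]| ≤ M := abs_integral_le_of_ae_abs_le hX₀M
  have hm₂ : |μ[Y₀]| ≤ M := abs_integral_le_of_ae_abs_le hY₀M
  have hD : 0 ≤ Var[X₀; μ] + Var[Y₀; μ] - 2 * cov[X₀, Y₀; μ] := by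
    linarith [variance_nonneg (X₀ - Y₀) μ, variance_sub hX₀2 hY₀2]
  have hP : |Var[Y₀; μ] - cov[X₀, Y₀; μ]| ≤ 4 * M ^ 2 := by
    rw [variance_eq_integral_mul_sub hY₀2, covariance_eq_sub hX₀2 hY₀2]
    have hYY : |μ[Y₀ * Y₀]| ≤ M ^ 2 :=
      abs_integral_le_of_ae_abs_le (hY₀M.mono fun ω h ↦ abs_mul_le_sq h h)
    have hXY : |μ[X₀ * Y₀]| ≤ M ^ 2 :=
      abs_integral_le_of_ae_abs_le (hX₀M.and hY₀M |>.mono fun ω h ↦ abs_mul_le_sq h.1 h.2)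
    have hYY' := abs_mul_le_sq hm₂ hm₂
    have hXY' := abs_mul_le_sq hm₁ hm₂
    rw [abs_le] at hYY hXY hYY' hXY' ⊢
    constructor <;> linarith
  have hvP : |empCovar X X ω - Var[X₀; μ]| ≤ (1 + 2 * M) * a + 4 * M ^ 2 / B := by
    rw [variance_eq_integral_mul_sub hX₀2]
    exact abs_empCovar_sub_le hB hM hX hX hm₁ (hdev 0) (hdev 0) (hdev 2)
  have hvM : |empCovar Y Y ω - Var[Y₀; μ]| ≤ (1 + 2 * M) * a + 4 * M ^ 2 / B := by
    rw [variance_eq_integral_mul_sub hY₀2]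
    exact abs_empCovar_sub_le hB hM hY hY hm₂ (hdev 1) (hdev 1) (hdev 3)
  have hc : |empCovar X Y ω - cov[X₀, Y₀; μ]| ≤ (1 + 2 * M) * a + 4 * M ^ 2 / B := by
    rw [covariance_eq_sub hX₀2 hY₀2]
    exact abs_empCovar_sub_le hB hM hX hY hm₂ (hdev 0) (hdev 1) (hdev 4)
  exact (abs_mixingWeight_sub_le hε (empCovar_add_empCovar_sub_two_mul_nonneg X Y ω) hD hP
    hvP hvM hc).trans_eq (by ring)

lemma one_le_log_six_div {δ : ℝ} (hδ₀ : 0 < δ) (hδ₁ : δ ≤ 1) : 1 ≤ log (6 / δ) := by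
  rw [le_log_iff_exp_le (by positivity), le_div_iff₀ hδ₀]
  nlinarith [exp_one_lt_d9]

lemma inv_le_sqrt_log_six_div {B : ℕ} (hB : 0 < B) {δ : ℝ} (hδ₀ : 0 < δ) (hδ₁ : δ ≤ 1) :
    (B : ℝ)⁻¹ ≤ √(log (6 / δ) / B) := by
  have hB' : (1 : ℝ) ≤ B := by exact_mod_cast hB
  have hL := one_le_log_six_div hδ₀ hδ₁
  rw [le_sqrt (by positivity) (by positivity)]
  calc (B : ℝ)⁻¹ ^ 2 ≤ 1 / B := by
        rw [inv_pow, one_div]; exact inv_anti₀ (by positivity) (by nlinarith)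
    _ ≤ log (6 / δ) / B := by gcongr

lemma two_mul_exp_neg_eq_sq_div_eighteen {B : ℕ} (hB : 0 < B) {K δ : ℝ} (hK : K ≠ 0) (hδ₀ : 0 < δ)
    (hδ₁ : δ ≤ 1) :
    2 * exp (-B * (2 * K * √(log (6 / δ) / B)) ^ 2 / (2 * K ^ 2)) = δ ^ 2 / 18 := by
  have hL : 0 ≤ log (6 / δ) := zero_le_one.trans (one_le_log_six_div hδ₀ hδ₁)
  have hexponent : -B * (2 * K * √(log (6 / δ) / B)) ^ 2 / (2 * K ^ 2) = -2 * log (6 / δ) := by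
    rw [mul_pow, sq_sqrt (by positivity)]
    field_simp
  rw [hexponent, show -2 * log (6 / δ) = -(log (6 / δ) + log (6 / δ)) by ring, exp_neg, exp_add,
    exp_log (by positivity)]
  field_simp
  norm_num

/-- Finite-sample convergence of the estimated optimal mixing weight: for i.i.d. bounded pairs
`(Xᵢ, Yᵢ)` there is a constant `C` depending only on `M` and `ε` (not on `B` or `δ`) such that
for every `δ ∈ (0,1)`, with probability at least `1 − δ`,
`|λ̂ − λ*_ε| ≤ C·√(log(6/δ)/B)`, where `λ*_ε` is the population regularized mixing weight. -/
theorem empirical_lambda_concentration (M ε : ℝ) (hM : 0 < M) (hε : 0 < ε) :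
    ∃ C : ℝ, ∀ (Ω : Type) (_ : MeasurableSpace Ω) (μ : Measure Ω),
      IsProbabilityMeasure μ →
      ∀ (B : ℕ) (hB : 2 ≤ B) (X Y : Fin B → Ω → ℝ),
        (∀ i, Measurable (X i)) → (∀ i, Measurable (Y i)) →
        (∀ i, ∀ᵐ ω ∂μ, |X i ω| ≤ M) → (∀ i, ∀ᵐ ω ∂μ, |Y i ω| ≤ M) →
        iIndepFun (fun i ω => (X i ω, Y i ω)) μ →
        (∀ i j, IdentDistrib (fun ω => (X i ω, Y i ω)) (fun ω => (X j ω, Y j ω)) μ μ) →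
        ∀ δ : ℝ, 0 < δ → δ < 1 →
          ENNReal.ofReal (1 - δ) ≤
            μ {ω |
              |empLambda ε X Y ω -
                (variance (Y ⟨0, by omega⟩) μ - covar μ (X ⟨0, by omega⟩) (Y ⟨0, by omega⟩)) /
                  (variance (X ⟨0, by omega⟩) μ + variance (Y ⟨0, by omega⟩) μ -
                    2 * covar μ (X ⟨0, by omega⟩) (Y ⟨0, by omega⟩) + ε)| ≤
                C * Real.sqrt (Real.log (6 / δ) / B)} := by
  set K := max M (M ^ 2)
  have hK : 0 < K := lt_max_of_lt_left hM
  refine ⟨(2 / ε + 16 * M ^ 2 / ε ^ 2) * ((1 + 2 * M) * (2 * K) + 4 * M ^ 2), ?_⟩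
  intro Ω _ μ _ B hB X Y hXm hYm hXM hYM hind hid δ hδ₀ hδ₁
  have hB₀ : 0 < B := by omega
  set j : Fin B := ⟨0, hB₀⟩
  set r := √(log (6 / δ) / B)
  have hunbounded : μ.real {ω | ¬ ∀ i, |X i ω| ≤ M ∧ |Y i ω| ≤ M} = 0 := by
    rw [measureReal_eq_zero_iff]
    exact ae_iff.mp (ae_all_iff.mpr fun i ↦ (hXM i).and (hYM i))
  have hdev := measureReal_exists_abs_empMean_comp_sub_ge_le hB₀ hind (hid · j)
    measurable_pairMonomial (fun k i ↦ (hXM i).and (hYM i) |>.mono fun ω h ↦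
      abs_pairMonomial_le h.1 h.2 k) (t := 2 * K * r) (by positivity)
  rw [two_mul_exp_neg_eq_sq_div_eighteen hB₀ hK.ne' hδ₀ hδ₁.le] at hdev
  apply ofReal_one_sub_le_of_measureReal_compl_le
  refine (measureReal_mono fun ω hω ↦ ?_).trans ((measureReal_union_le _ _).trans
    ((add_le_add hunbounded.le hdev).trans ?_))
  · by_contra hgood
    simp only [Set.mem_union, Set.mem_ofPred_eq, not_or, not_not, not_exists, not_le] at hgood
    obtain ⟨hbdd, hclose⟩ := hgood
    -- the goal's `covar` is `cov[·, ·; μ]` and its quotient is `mixingWeight`, up to unfolding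
    refine hω ((abs_empLambda_sub_mixingWeight_le hB hM.le hε (hXm j).aemeasurable
      (hYm j).aemeasurable (hXM j) (hYM j) (fun i ↦ (hbdd i).1) (fun i ↦ (hbdd i).2)
      fun k ↦ (hclose k).le).trans ?_)
    refine (mul_le_mul_of_nonneg_left ?_ (by positivity)).trans_eq (mul_assoc ..).symm
    have hr := inv_le_sqrt_log_six_div hB₀ hδ₀ hδ₁.le
    rw [div_eq_mul_inv]
    nlinarith
  · norm_num
    nlinarith
end
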